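/- arXiv:2411.03596 — 7 statements merged into one kernel-verified Lean document; each statement's English description precedes it below -/
import Mathlib

section
/- In the single-batch TGN computation on the two event lists G and G′, node 1's embedding is the same in both graphs: z′₁ = z₁, where z₁ = g({{ h(s₁, s_v, e) : (1, v, t, e) an event of G }}) and z′₁ = g({{ h(s′₁, s′_v, e) : (1, v, t, e) an event of G′ }}), the arguments to g being multisets. -/
/-- Events `(u, v, t, e)`: source node, destination node, time, scalar feature. -/
abbrev Event : Type := ℕ × ℕ × ℝ × ℝ

/-- A (single-batch) TGN formulation. -/
structure TGN (S M M' E : Type*) where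
  s0 : S
  msgS : S → S → ℝ → ℝ → M
  msgD : S → S → ℝ → ℝ → M
  agg : List M → M'
  memUpd : M' → S → S
  h : S → S → ℝ → E
  g : Multiset E → ℝ × ℝ × ℝ

variable {S M M' E : Type*}

/-- Time-ordered list of messages received by node `i` when the event list `L`
is processed as a single batch (all memories at the initial state `s0`). -/
def TGN.recv (T : TGN S M M' E) (i : ℕ) (L : List Event) : List M :=
  L.flatMap fun ev =>
    (if ev.1 = i then [T.msgS T.s0 T.s0 ev.2.2.1 ev.2.2.2] else []) ++
    (if ev.2.1 = i then [T.msgD T.s0 T.s0 ev.2.2.1 ev.2.2.2] else [])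

/-- Memory of node `i` after the single-batch update on event list `L`. -/
def TGN.memOf (T : TGN S M M' E) (i : ℕ) (L : List Event) : S :=
  match T.recv i L with
  | [] => T.s0
  | msg :: msgs => T.memUpd (T.agg (msg :: msgs)) T.s0

/-- Embedding of node 1: `g` applied to the multiset of pair features
`h(s₁, s_v, e)` over events `(1, v, t, e)` with source 1. -/
def TGN.emb (T : TGN S M M' E) (L : List Event) : ℝ × ℝ × ℝ :=
  T.g ↑(L.filterMap fun ev =>
    if ev.1 = 1 then some (T.h (T.memOf 1 L) (T.memOf ev.2.1 L) ev.2.2.2) else none)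

/-- Graph `G`: node 1 sends `α₁,…,αₙ` to node 2 at times `t₁ < ⋯ < tₙ`, then
sends `β₁,…,β_m` to node 3 at times `t_{n+1} < ⋯ < t_{n+m}`. -/
def graphG (n m : ℕ) (α β t : ℕ → ℝ) : List Event :=
  ((List.range n).map fun i => (1, 2, t (i + 1), α (i + 1))) ++
  ((List.range m).map fun i => (1, 3, t (n + i + 1), β (i + 1)))

/-- Graph `G'`: the flipped graph, with destinations 2 and 3 exchanged. -/
def graphG' (n m : ℕ) (α β t : ℕ → ℝ) : List Event :=
  ((List.range n).map fun i => (1, 3, t (i + 1), α (i + 1))) ++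
  ((List.range m).map fun i => (1, 2, t (n + i + 1), β (i + 1)))

/-- In the single-batch TGN computation on `G` and `G'`,
node 1's embedding is the same in both graphs: `z′₁ = z₁`. -/
theorem tgn_flipped_embedding {S M M' E : Type*} (T : TGN S M M' E)
    (k n m : ℕ) (hk : 0 < k) (hn : k ≤ n) (hm : k ≤ m)
    (α β t : ℕ → ℝ) (ht : StrictMonoOn t (Set.Icc 1 (n + m))) :
    T.emb (graphG' n m α β t) = T.emb (graphG n m α β t) := by
  have h1 : T.recv 1 (graphG' n m α β t) = T.recv 1 (graphG n m α β t) := by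
    simp [TGN.recv, graphG, graphG', List.flatMap_append, List.flatMap_map]
  have h2 : T.recv 2 (graphG' n m α β t) = T.recv 3 (graphG n m α β t) := by
    simp [TGN.recv, graphG, graphG', List.flatMap_append, List.flatMap_map]
  have h3 : T.recv 3 (graphG' n m α β t) = T.recv 2 (graphG n m α β t) := by
    simp [TGN.recv, graphG, graphG', List.flatMap_append, List.flatMap_map]
  have m1 : T.memOf 1 (graphG' n m α β t) = T.memOf 1 (graphG n m α β t) := by
    unfold TGN.memOf; rw [h1]
  have m2 : T.memOf 2 (graphG' n m α β t) = T.memOf 3 (graphG n m α β t) := by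
    unfold TGN.memOf; rw [h2]
  have m3 : T.memOf 3 (graphG' n m α β t) = T.memOf 2 (graphG n m α β t) := by
    unfold TGN.memOf; rw [h3]
  unfold TGN.emb
  congr 1
  simp only [graphG, graphG'] at m1 m2 m3
  simp [graphG, graphG', List.filterMap_append, List.filterMap_map, Function.comp_def, m1, m2, m3]
end

section
/- (Theorem 1) For every k ∈ ℕ⁺, there is no TGN formulation that represents the moving average of order k: no choice of S, M, M′, E, s₀, msg_s, msg_d, agg, mem, h, g satisfies, for all n, m ≥ k, all reals α₁,…,αₙ, β₁,…,β_m and all strictly increasing times t₁ < ⋯ < t_{n+m}, both z₁ = (0, ᾱ, β̄) on G and z′₁ = (0, β̄, ᾱ) on G′, where ᾱ = (1/k)·Σ_{i=n−k+1}^{n} αᵢ and β̄ = (1/k)·Σ_{i=m−k+1}^{m} βᵢ. -/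
variable {S M M' E : Type*}

/-!
Under single-batch processing a node's memory is determined by the list of messages it
receives, irrespective of its name, so the embedding of node 1 is invariant under any renaming
of the other nodes. `G'` is `G` with nodes 2 and 3 swapped, hence `z₁ = z'₁`; but for `α ≡ 0`,
`β ≡ 1` the required embeddings are `(0, 0, 1)` and `(0, 1, 0)`.
-/

def Event.relabel (σ : Equiv.Perm ℕ) (ev : Event) : Event :=
  (σ ev.1, σ ev.2.1, ev.2.2)

namespace TGN

variable (T : TGN S M M' E) (σ : Equiv.Perm ℕ) (L : List Event)

theorem recv_map_relabel (i : ℕ) :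
    T.recv (σ i) (L.map (Event.relabel σ)) = T.recv i L := by
  simp only [recv, List.flatMap_map, Event.relabel, σ.apply_eq_iff_eq]

theorem memOf_map_relabel (i : ℕ) :
    T.memOf (σ i) (L.map (Event.relabel σ)) = T.memOf i L := by
  unfold memOf
  rw [recv_map_relabel]

theorem emb_map_relabel (hσ : σ 1 = 1) :
    T.emb (L.map (Event.relabel σ)) = T.emb L := by
  have hmem₁ : T.memOf 1 (L.map (Event.relabel σ)) = T.memOf 1 L := by
    simpa only [hσ] using T.memOf_map_relabel σ L 1
  unfold emb
  rw [hmem₁, List.filterMap_map]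
  congr 2
  refine List.filterMap_congr fun ev _ => ?_
  have hsrc : σ ev.1 = 1 ↔ ev.1 = 1 := by
    rw [← σ.eq_symm_apply, σ.symm_apply_eq.mpr hσ.symm]
  simp only [Function.comp_apply, Event.relabel, hsrc, memOf_map_relabel]

end TGN

theorem graphG'_eq_map_relabel_swap (n m : ℕ) (α β t : ℕ → ℝ) :
    graphG' n m α β t = (graphG n m α β t).map (Event.relabel (Equiv.swap 2 3)) := by
  simp [graphG, graphG', Event.relabel, Function.comp_def, Equiv.swap_apply_of_ne_of_ne]

theorem TGN.emb_graphG' (T : TGN S M M' E) (n m : ℕ) (α β t : ℕ → ℝ) :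
    T.emb (graphG' n m α β t) = T.emb (graphG n m α β t) := by
  rw [graphG'_eq_map_relabel_swap]
  exact T.emb_map_relabel _ _ (by decide)

theorem movingAverage_const {k n : ℕ} (hk : 0 < k) (hkn : k ≤ n) (c : ℝ) :
    (1 / (k : ℝ)) * ∑ _i ∈ Finset.Icc (n - k + 1) n, c = c := by
  have hcard : (Finset.Icc (n - k + 1) n).card = k := by
    rw [Nat.card_Icc]
    omega
  rw [Finset.sum_const, hcard, nsmul_eq_mul]
  field_simp

/-- **Theorem 1.** For every `k ∈ ℕ⁺`, no TGN formulation
represents the moving average of order `k`. -/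
theorem tgn_cannot_represent_moving_average (k : ℕ) (hk : 0 < k)
    {S M M' E : Type*} (T : TGN S M M' E) :
    ¬ (∀ (n m : ℕ), k ≤ n → k ≤ m → ∀ (α β t : ℕ → ℝ),
        StrictMonoOn t (Set.Icc 1 (n + m)) →
        T.emb (graphG n m α β t) =
          (0, (1 / (k : ℝ)) * ∑ i ∈ Finset.Icc (n - k + 1) n, α i,
              (1 / (k : ℝ)) * ∑ i ∈ Finset.Icc (m - k + 1) m, β i) ∧
        T.emb (graphG' n m α β t) =
          (0, (1 / (k : ℝ)) * ∑ i ∈ Finset.Icc (m - k + 1) m, β i,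
              (1 / (k : ℝ)) * ∑ i ∈ Finset.Icc (n - k + 1) n, α i)) := by
  intro H
  obtain ⟨hG, hG'⟩ := H k k le_rfl le_rfl (fun _ => 0) (fun _ => 1) (Nat.cast : ℕ → ℝ)
    (Nat.strictMono_cast.strictMonoOn _)
  rw [T.emb_graphG', hG, movingAverage_const hk le_rfl,
    movingAverage_const hk le_rfl] at hG'
  norm_num at hG'
end

section
/- No TGN formulation represents persistent forecasting: no choice of S, M, M′, E, s₀, msg_s, msg_d, agg, mem, h, g satisfies, for all n, m ≥ 1, all reals α₁,…,αₙ, β₁,…,β_m and all strictly increasing times t₁ < ⋯ < t_{n+m}, both z₁ = (0, αₙ, β_m) on G and z′₁ = (0, β_m, αₙ) on G′ (the persistent forecast outputs, for each destination, the feature of the most recent message sent to it). -/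
variable {S M M' E : Type*}

/-- No TGN formulation represents persistent forecasting. -/
theorem tgn_cannot_represent_persistent_forecast
    {S M M' E : Type*} (T : TGN S M M' E) :
    ¬ (∀ (n m : ℕ), 1 ≤ n → 1 ≤ m → ∀ (α β t : ℕ → ℝ),
        StrictMonoOn t (Set.Icc 1 (n + m)) →
        T.emb (graphG n m α β t) = (0, α n, β m) ∧
        T.emb (graphG' n m α β t) = (0, β m, α n)) := by
  intro H
  have h := H 1 1 le_rfl le_rfl (fun _ => 0) (fun _ => 1)
      (fun i => (i : ℝ)) (by
        intro a _ b _ hab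
        exact Nat.cast_lt.mpr hab)
  have heq : T.emb (graphG 1 1 (fun _ => 0) (fun _ => 1) (fun i => (i : ℝ)))
      = T.emb (graphG' 1 1 (fun _ => 0) (fun _ => 1) (fun i => (i : ℝ))) := by
    simp [TGN.emb, TGN.memOf, TGN.recv, graphG, graphG', List.range_succ]
  rw [h.1, h.2] at heq
  exact zero_ne_one (congrArg (fun p => p.2.1) heq)
end

section
/- (Corollary 2) For every k ∈ ℕ⁺ and every weight vector w = (w₁,…,w_k) ∈ ℝᵏ with w ≠ 0, there is no TGN formulation that represents the autoregressive model of order k with coefficients w: no choice of S, M, M′, E, s₀, msg_s, msg_d, agg, mem, h, g satisfies, for all n, m ≥ k, all reals α₁,…,αₙ, β₁,…,β_m and all strictly increasing times t₁ < ⋯ < t_{n+m}, both z₁ = (0, ᾱ, β̄) on G and z′₁ = (0, β̄, ᾱ) on G′, where ᾱ = Σ_{i=1}^{k} wᵢ·α_{n−i+1} and β̄ = Σ_{i=1}^{k} wᵢ·β_{m−i+1}. -/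
variable {S M M' E : Type*}

lemma recv_eq (T : TGN S M M' E) (n m : ℕ) (α β t : ℕ → ℝ) :
    T.recv 1 (graphG n m α β t) = T.recv 1 (graphG' n m α β t) ∧
    T.recv 2 (graphG n m α β t) = T.recv 3 (graphG' n m α β t) ∧
    T.recv 3 (graphG n m α β t) = T.recv 2 (graphG' n m α β t) := by
  refine ⟨?_, ?_, ?_⟩ <;>
    simp [TGN.recv, graphG, graphG', List.flatMap_append, List.flatMap_map]

lemma mem_eq (T : TGN S M M' E) (n m : ℕ) (α β t : ℕ → ℝ) :
    T.memOf 1 (graphG n m α β t) = T.memOf 1 (graphG' n m α β t) ∧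
    T.memOf 2 (graphG n m α β t) = T.memOf 3 (graphG' n m α β t) ∧
    T.memOf 3 (graphG n m α β t) = T.memOf 2 (graphG' n m α β t) := by
  obtain ⟨h1, h2, h3⟩ := recv_eq T n m α β t
  refine ⟨?_, ?_, ?_⟩ <;> unfold TGN.memOf
  · rw [h1]
  · rw [h2]
  · rw [h3]

lemma emb_eq (T : TGN S M M' E) (n m : ℕ) (α β t : ℕ → ℝ) :
    T.emb (graphG n m α β t) = T.emb (graphG' n m α β t) := by
  obtain ⟨h1, h2, h3⟩ := mem_eq T n m α β t
  simp only [graphG, graphG'] at h1 h2 h3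
  simp only [TGN.emb, graphG, graphG', List.filterMap_append, List.filterMap_map,
    Function.comp_def]
  simp only [h1, h2, h3]

/-- **Corollary 2.** For every `k ∈ ℕ⁺` and nonzero weight
vector `w ∈ ℝᵏ`, no TGN formulation represents the autoregressive model of
order `k` with coefficients `w` (here `w i` stands for `w_{i+1}`, so the
autoregressive output for the `α` stream is `∑_{i=1}^{k} wᵢ · α_{n−i+1}`). -/
theorem tgn_cannot_represent_autoregressive (k : ℕ) (hk : 0 < k)
    (w : Fin k → ℝ) (hw : w ≠ 0)
    {S M M' E : Type*} (T : TGN S M M' E) :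
    ¬ (∀ (n m : ℕ), k ≤ n → k ≤ m → ∀ (α β t : ℕ → ℝ),
        StrictMonoOn t (Set.Icc 1 (n + m)) →
        T.emb (graphG n m α β t) =
          (0, ∑ i : Fin k, w i * α (n - (i : ℕ)),
              ∑ i : Fin k, w i * β (m - (i : ℕ))) ∧
        T.emb (graphG' n m α β t) =
          (0, ∑ i : Fin k, w i * β (m - (i : ℕ)),
              ∑ i : Fin k, w i * α (n - (i : ℕ)))) := by
  intro hrep
  obtain ⟨i₀, hi₀⟩ : ∃ i, w i ≠ 0 := by
    by_contra h
    push_neg at h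
    exact hw (funext h)
  set α : ℕ → ℝ := fun j => if j = k - (i₀ : ℕ) then 1 else 0 with hα
  set β : ℕ → ℝ := fun _ => 0 with hβ
  have hmono : StrictMonoOn (fun j : ℕ => (j : ℝ)) (Set.Icc 1 (k + k)) := by
    intro a _ b _ hab
    simpa using hab
  obtain ⟨hG, hG'⟩ := hrep k k le_rfl le_rfl α β (fun j => (j : ℝ)) hmono
  have hsumα : ∑ i : Fin k, w i * α (k - (i : ℕ)) = w i₀ := by
    rw [Finset.sum_eq_single i₀]
    · simp [hα]
    · intro b _ hb
      have hb2 := b.2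
      have hi2 := i₀.2
      have : k - (b : ℕ) ≠ k - (i₀ : ℕ) := fun h => hb (Fin.ext (by omega))
      simp [hα, this]
    · simp
  have hsumβ : ∑ i : Fin k, w i * β (k - (i : ℕ)) = 0 := by simp [hβ]
  rw [hsumα, hsumβ] at hG hG'
  have := emb_eq T k k α β (fun j => (j : ℝ))
  rw [hG, hG'] at this
  have : w i₀ = 0 := by
    have h2 := congrArg (fun p : ℝ × ℝ × ℝ => p.2.1) this
    simpa using h2
  exact hi₀ this
end

section
/- Let n, k ∈ ℕ⁺, let P be the permutation matrix on index set Fin n × Fin k of the bijection (i, r) ↦ (i+1 mod n, r), let S be the k × k down-shift matrix (S(r,r′) = 1 if r = r′+1, else 0), and let X be the block-diagonal matrix whose block 0 is S and whose every other block is the k × k identity. Then for every j ∈ Fin n, every s : Fin n × Fin k → ℝ, and every e ∈ ℝ, the vector (P^j * X * (Pᵀ)^j).mulVec s + e · δ_{(j,0)} (where δ_{(j,0)} is the standard basis vector supported at (j,0)) equals the shift-and-insert update u(s,(j,e)), i.e. its value at coordinate (i,r) is: e if (i,r) = (j,0); s(j, r−1) if i = j and r > 0; and s(i,r) if i ≠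 j. -/
open Matrix

/-- The shift-and-insert update: `shiftInsert s (j, e)` writes `e` into slot 0
of block `j`, shifts the previous contents of block `j` down by one slot
(discarding the last), and leaves all other blocks unchanged. -/
def shiftInsert {n k : ℕ} [NeZero k] (s : Fin n × Fin k → ℝ)
    (je : Fin n × ℝ) : Fin n × Fin k → ℝ := fun p =>
  if p = (je.1, 0) then je.2
  else if p.1 = je.1 then s (je.1, p.2 - 1)
  else s p

/-!
`P` is the permutation matrix of the block rotation `σ (i, r) = (i - 1, r)`, so conjugating by
`P ^ j` relabels blocks: `(P ^ j * X * Pᵀ ^ j) *ᵥ s` at `(i, r)` is block `i - j` of `X` applied to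
block `i` of `s`. Hence block `j` of `s` is shifted down by `S` while every other block is
multiplied by the identity, and adding `e • δ_(j,0)` fills the slot vacated by the shift.
-/

open Equiv

namespace Matrix

section Permutation

variable {α R : Type*} [DecidableEq α] [Fintype α]

lemma permMatrix_pow [Semiring R] (σ : Perm α) (m : ℕ) :
    σ.permMatrix R ^ m = (σ ^ m).permMatrix R := by
  simpa [inv_pow] using ((permMatrixHom (n := α) (R := R)).map_pow σ⁻¹ m).symm

lemma permMatrix_pow_mul_mul_transpose_pow_mulVec [CommRing R] (σ : Perm α)
    (M : Matrix α α R) (m : ℕ) (v : α → R) :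
    (σ.permMatrix R ^ m * M * (σ.permMatrix R)ᵀ ^ m) *ᵥ v
      = (M *ᵥ (v ∘ ⇑(σ ^ m)⁻¹)) ∘ ⇑(σ ^ m) := by
  rw [transpose_permMatrix, permMatrix_pow, permMatrix_pow, ← mulVec_mulVec, ← mulVec_mulVec,
    permMatrix_mulVec, permMatrix_mulVec, inv_pow]

end Permutation

lemma mulVec_apply_eq_submatrix_mulVec {ι κ R : Type*} [Fintype ι] [Fintype κ]
    [NonUnitalNonAssocSemiring R] (X : Matrix (ι × κ) (ι × κ) R)
    (hX : ∀ i i' r r', i ≠ i' → X (i, r) (i', r') = 0) (w : ι × κ → R) (i : ι) (r : κ) :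
    (X *ᵥ w) (i, r) = (X.submatrix (Prod.mk i) (Prod.mk i) *ᵥ (w ∘ Prod.mk i)) r := by
  classical
  simp only [mulVec, dotProduct, Fintype.sum_prod_type]
  rw [Finset.sum_eq_single i]
  · rfl
  · intro i' _ hi'
    exact Finset.sum_eq_zero fun r' _ => by rw [hX _ _ _ _ (Ne.symm hi'), zero_mul]
  · simp

lemma mulVec_apply_of_downShift {k : ℕ} [NeZero k] {R : Type*} [NonAssocSemiring R]
    {S : Matrix (Fin k) (Fin k) R}
    (hS : ∀ r r' : Fin k, S r r' = if (r : ℕ) = (r' : ℕ) + 1 then 1 else 0)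
    (v : Fin k → R) (r : Fin k) :
    (S *ᵥ v) r = if r = 0 then 0 else v (r - 1) := by
  have hsucc : ∀ r' : Fin k, (r : ℕ) = r' + 1 ↔ r ≠ 0 ∧ r' = r - 1 := by
    intro r'
    constructor
    · intro h
      have hr : r ≠ 0 := fun h0 => by simp [h0] at h
      exact ⟨hr, Fin.ext (by rw [Fin.val_sub_one_of_ne_zero hr]; omega)⟩
    · rintro ⟨hr, rfl⟩
      rw [Fin.val_sub_one_of_ne_zero hr]
      have := Fin.pos_iff_ne_zero.2 hr
      omega
  simp only [mulVec, dotProduct, hS, hsucc, ite_mul, one_mul, zero_mul]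
  split_ifs with hr <;> simp [hr]

end Matrix

lemma Equiv.Perm.prodCongr_refl_pow {α κ : Type*} (e : Perm α) (m : ℕ) :
    (e.prodCongr (Equiv.refl κ) : Perm (α × κ)) ^ m = (e ^ m).prodCongr (Equiv.refl κ) := by
  induction m with
  | zero => ext <;> simp
  | succ m ih => ext <;> simp [pow_succ, ih]

lemma Fin.val_nsmul_one {n : ℕ} [NeZero n] (j : Fin n) : (j : ℕ) • (1 : Fin n) = j := by
  open Fin.NatCast in rw [nsmul_one, Fin.cast_val_eq_self]

/-- With `P` the block-cycling permutation matrix, `S` the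
`k × k` down-shift matrix, and `X` the block-diagonal matrix whose block `0`
is `S` and whose other blocks are the identity, for every `j`, `s`, `e` the
vector `(P^j * X * (Pᵀ)^j).mulVec s + e • δ_{(j,0)}` equals the
shift-and-insert update `shiftInsert s (j, e)`. -/
theorem linear_form_of_shiftInsert (n k : ℕ) [NeZero n] [NeZero k]
    (P : Matrix (Fin n × Fin k) (Fin n × Fin k) ℝ)
    (hP : ∀ a b : Fin n × Fin k,
      P a b = if a.1 = b.1 + 1 ∧ a.2 = b.2 then 1 else 0)
    (S : Matrix (Fin k) (Fin k) ℝ)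
    (hS : ∀ r r' : Fin k, S r r' = if (r : ℕ) = (r' : ℕ) + 1 then 1 else 0)
    (X : Matrix (Fin n × Fin k) (Fin n × Fin k) ℝ)
    (hX0 : ∀ r r' : Fin k, X ((0 : Fin n), r) ((0 : Fin n), r') = S r r')
    (hXI : ∀ (i : Fin n) (r r' : Fin k), i ≠ 0 →
      X (i, r) (i, r') = if r = r' then 1 else 0)
    (hXoff : ∀ (i i' : Fin n) (r r' : Fin k), i ≠ i' → X (i, r) (i', r') = 0) :
    ∀ (j : Fin n) (s : Fin n × Fin k → ℝ) (e : ℝ),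
      (P ^ (j : ℕ) * X * Pᵀ ^ (j : ℕ)).mulVec s
          + e • (Pi.single ((j, 0) : Fin n × Fin k) (1 : ℝ) : Fin n × Fin k → ℝ)
        = shiftInsert s (j, e) := by
  intro j s e
  set σ : Perm (Fin n × Fin k) := prodCongr (Equiv.addRight (-1)) (Equiv.refl _)
  have hPσ : P = σ.permMatrix ℝ := by
    ext a b
    simp [hP, PEquiv.toMatrix_apply, σ, Prod.ext_iff, add_neg_eq_iff_eq_add]
  have hσj : σ ^ (j : ℕ) = prodCongr (Equiv.addRight (-j)) (Equiv.refl _) := by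
    rw [Perm.prodCongr_refl_pow, nsmul_addRight, smul_neg, Fin.val_nsmul_one]
  have hblock0 : X.submatrix (Prod.mk 0) (Prod.mk 0) = S := Matrix.ext hX0
  have hblock : ∀ i ≠ 0, X.submatrix (Prod.mk i) (Prod.mk i) = 1 := fun i hi => by
    ext r r'
    simp [hXI i r r' hi, one_apply]
  rw [hPσ, permMatrix_pow_mul_mul_transpose_pow_mulVec, hσj]
  ext ⟨i, r⟩
  simp only [Perm.inv_def, prodCongr_symm, addRight_symm, neg_neg, refl_symm, prodCongr_apply,
    coe_addRight, coe_refl, Function.comp_def, ← sub_eq_add_neg,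
    mulVec_apply_eq_submatrix_mulVec X hXoff, Prod.map_apply, sub_add_cancel, id_eq,
    Pi.add_apply, Pi.smul_apply, smul_eq_mul]
  by_cases hij : i = j
  · subst hij
    simp only [sub_self, hblock0, mulVec_apply_of_downShift hS, shiftInsert, Pi.single_apply,
      Prod.mk.injEq, true_and, mul_ite, mul_one, mul_zero, if_true]
    split_ifs <;> simp
  · simp [hblock _ (sub_ne_zero.2 hij), shiftInsert, hij]
end

section
/- For every event list L, every j ∈ Fin n, and every r ∈ Fin k, the folded memory satisfies s_L(j, r) = e_j^{(M_j − r)}: coordinate (j, r) of the memory holds the feature of the (r+1)-th most recent event in L with destination j, and equals 0 if fewer than r+1 events with destination j have occurred. -/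
/-- `sFold n k L` : the left fold of the shift-and-insert update over the
event list `L`, starting from the zero memory vector. -/
def sFold (n k : ℕ) [NeZero k] (L : List (Fin n × ℝ)) : Fin n × Fin k → ℝ :=
  L.foldl shiftInsert 0

/-- `countDest j L` : the number `M_j` of events in `L` with destination `j`. -/
def countDest {n : ℕ} (j : Fin n) (L : List (Fin n × ℝ)) : ℕ :=
  (L.filter fun ev => ev.1 = j).length

/-- `featAt j L l` : the feature `e_j^{(l)}` of the `l`-th event of `L` with
destination `j` (1-indexed, in order of occurrence), with `e_j^{(0)} := 0`
(covering the convention `e_j^{(l)} := 0` for `l ≤ 0`, since natural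
subtraction truncates at `0`). -/
def featAt {n : ℕ} (j : Fin n) (L : List (Fin n × ℝ)) : ℕ → ℝ
  | 0 => 0
  | l + 1 => ((L.filter fun ev => ev.1 = j).map Prod.snd).getD l 0

/-! Induct on `L` from the right. Appending an event for `j` moves slot `r - 1` of block `j` to
slot `r` and raises `M_j` by one, so `M_j - r` still indexes the same event; appending an event for
another node changes neither block `j` nor `M_j`. -/

lemma sFold_append_singleton (n k : ℕ) [NeZero k] (L : List (Fin n × ℝ)) (a : Fin n × ℝ) :
    sFold n k (L ++ [a]) = shiftInsert (sFold n k L) a := by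
  simp [sFold, List.foldl_append]

section shiftInsert

variable {n k : ℕ} [NeZero k] (s : Fin n × Fin k → ℝ) {j i : Fin n} (e : ℝ) {r : Fin k}

lemma shiftInsert_apply_self_zero : shiftInsert s (j, e) (j, 0) = e := by
  simp [shiftInsert]

lemma shiftInsert_apply_self_of_ne_zero (hr : r ≠ 0) :
    shiftInsert s (j, e) (j, r) = s (j, r - 1) := by
  simp [shiftInsert, hr]

lemma shiftInsert_apply_of_ne (hij : i ≠ j) : shiftInsert s (j, e) (i, r) = s (i, r) := by
  simp [shiftInsert, hij]

end shiftInsert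

section featAt

variable {n : ℕ} {j i : Fin n} (L : List (Fin n × ℝ)) (e : ℝ)

lemma countDest_append_singleton_self : countDest j (L ++ [(j, e)]) = countDest j L + 1 := by
  simp [countDest]

lemma countDest_append_singleton_of_ne (hij : i ≠ j) :
    countDest i (L ++ [(j, e)]) = countDest i L := by
  simp [countDest, Ne.symm hij]

lemma featAt_append_of_le (L' : List (Fin n × ℝ)) {l : ℕ} (hl : l ≤ countDest j L) :
    featAt j (L ++ L') l = featAt j L l := by
  cases l with
  | zero => rfl
  | succ m =>
    simp only [featAt, List.filter_append, List.map_append]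
    exact List.getD_append _ _ _ m (by simpa [countDest] using hl)

lemma featAt_append_singleton_self_countDest :
    featAt j (L ++ [(j, e)]) (countDest j L + 1) = e := by
  simp [featAt, countDest, List.getD_eq_getElem?_getD]

end featAt

theorem sFold_eq_recent_feature_general (n k : ℕ) [NeZero k]
    (L : List (Fin n × ℝ)) (j : Fin n) (r : Fin k) :
    sFold n k L (j, r) = featAt j L (countDest j L - (r : ℕ)) := by
  induction L using List.reverseRecOn generalizing r with
  | nil => simp [sFold, countDest, featAt]
  | append_singleton L a ih =>
    obtain ⟨j', e⟩ := a
    rw [sFold_append_singleton]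
    rcases eq_or_ne j j' with rfl | hj
    · rw [countDest_append_singleton_self]
      rcases eq_or_ne r 0 with rfl | hr
      · rw [shiftInsert_apply_self_zero, Fin.val_zero, Nat.sub_zero,
          featAt_append_singleton_self_countDest]
      · have hr_pos : 0 < (r : ℕ) := Fin.pos_iff_ne_zero.mpr hr
        rw [shiftInsert_apply_self_of_ne_zero _ _ hr, ih, Fin.val_sub_one_of_ne_zero hr,
          featAt_append_of_le _ _ (by omega), Nat.sub_sub_right _ hr_pos]
    · rw [shiftInsert_apply_of_ne _ _ hj, ih, countDest_append_singleton_of_ne _ _ hj,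
        featAt_append_of_le _ _ (by omega)]

/-- For every event list `L`, `j ∈ Fin n` and `r ∈ Fin k`,
the folded memory satisfies `s_L(j, r) = e_j^{(M_j − r)}`: slot `r` of block
`j` holds the feature of the `(r+1)`-th most recent event with destination
`j`, and equals `0` if fewer than `r+1` such events have occurred. -/
theorem sFold_eq_recent_feature (n k : ℕ) [NeZero n] [NeZero k]
    (L : List (Fin n × ℝ)) (j : Fin n) (r : Fin k) :
    sFold n k L (j, r) = featAt j L (countDest j L - (r : ℕ)) :=
  sFold_eq_recent_feature_general n k L j r
end

section
/- (Theorem 3, autoregressive case) For every weight vector (w₁,…,w_k) ∈ ℝᵏ, every event list L, and every j ∈ Fin n, the w-weighted readout of the folded memory equals the order-k autoregressive readout of the event features sent to j: Σ_{r ∈ Fin k} w_{r+1} · s_L(j, r) = Σ_{i=1}^{k} w_i · e_j^{(M_j − i + 1)}. -/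
lemma featAt_append_le {n : ℕ} (j : Fin n) (L : List (Fin n × ℝ)) (a : Fin n × ℝ)
    (m : ℕ) (hm : m ≤ countDest j L) :
    featAt j (L ++ [a]) m = featAt j L m := by
  cases m with
  | zero => rfl
  | succ l =>
    simp only [featAt, List.filter_append, List.map_append]
    rw [List.getD_append]
    simp only [List.length_map]
    exact lt_of_lt_of_le (Nat.lt_succ_self l) hm

lemma key (n k : ℕ) [NeZero k] (L : List (Fin n × ℝ)) (j : Fin n) :
    ∀ r : Fin k, sFold n k L (j, r) = featAt j L (countDest j L - (r : ℕ)) := by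
  induction L using List.reverseRecOn with
  | nil =>
    intro r
    simp [sFold, countDest]
    cases (0 - (r:ℕ) : ℕ) <;> simp [featAt]
  | append_singleton L a ih =>
    intro r
    have hfold : sFold n k (L ++ [a]) = shiftInsert (sFold n k L) a := by
      simp [sFold, List.foldl_append]
    rw [hfold]
    by_cases hj : a.1 = j
    · have hcount : countDest j (L ++ [a]) = countDest j L + 1 := by
        simp [countDest, List.filter_append, hj]
      by_cases hr : r = 0
      · subst hr
        have : shiftInsert (sFold n k L) a (j, 0) = a.2 := by
          simp [shiftInsert, hj]
        rw [this, hcount]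
        simp only [Fin.val_zero, Nat.sub_zero, featAt]
        rw [List.filter_append, List.map_append]
        have hlen : ((L.filter fun ev => ev.1 = j).map Prod.snd).length = countDest j L := by
          simp [countDest]
        rw [List.getD_eq_getElem?_getD, List.getElem?_append_right (by omega)]
        simp [hlen, hj]
      · have hval : (r : ℕ) ≠ 0 := fun h => hr (Fin.ext h)
        have : shiftInsert (sFold n k L) a (j, r) = sFold n k L (j, r - 1) := by
          simp [shiftInsert, Prod.ext_iff, hj, hr]
        rw [this, ih (r - 1)]
        have hk : 1 < k := by
          rcases Nat.lt_or_ge 1 k with h | h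
          · exact h
          · have := r.isLt; omega
        have hsub : ((r - 1 : Fin k) : ℕ) = (r : ℕ) - 1 := by
          rw [Fin.sub_val_of_le (by simp [Fin.le_def, Nat.mod_eq_of_lt hk]; omega)]
          simp [Nat.mod_eq_of_lt hk]
        rw [hsub, hcount]
        rcases le_or_gt (r : ℕ) (countDest j L) with h | h
        · rw [featAt_append_le j L a _ (by omega)]
          congr 1
          omega
        · have h1 : countDest j L - ((r:ℕ) - 1) = 0 := by omega
          have h2 : countDest j L + 1 - (r:ℕ) = 0 := by omega
          rw [h1, h2]; rfl
    · have hcount : countDest j (L ++ [a]) = countDest j L := by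
        simp [countDest, List.filter_append, hj]
      have hfeat : ∀ m, featAt j (L ++ [a]) m = featAt j L m := by
        intro m; cases m with
        | zero => rfl
        | succ l => simp [featAt, List.filter_append, hj]
      have : shiftInsert (sFold n k L) a (j, r) = sFold n k L (j, r) := by
        simp only [shiftInsert]
        rw [if_neg, if_neg]
        · simpa using fun h => hj h.symm
        · simp [Prod.ext_iff]; exact fun h => absurd h.symm hj
      rw [this, ih r, hcount, hfeat]

/-- **Theorem 3, autoregressive case.** For every weight vector
`w ∈ ℝᵏ` (`w r` standing for `w_{r+1}`), every event list `L` and every `j`,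
the `w`-weighted readout of the folded memory equals the order-`k`
autoregressive readout `∑_{i=1}^{k} wᵢ · e_j^{(M_j − i + 1)}` of the event
features sent to `j`. -/
theorem sFold_autoregressive (n k : ℕ) [NeZero n] [NeZero k]
    (w : Fin k → ℝ) (L : List (Fin n × ℝ)) (j : Fin n) :
    ∑ r : Fin k, w r * sFold n k L (j, r)
      = ∑ i : Fin k, w i * featAt j L (countDest j L - (i : ℕ)) := by
  exact Finset.sum_congr rfl fun r _ => by rw [key n k L j r]
end
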